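/- For n ≥ 2, Σ_{k=2}^{n} (1/(k−1))·binomial(n,k) = n·Σ_{k=1}^{n−1} (2^k − 1)/k − 2^n + n + 1. -/

import Mathlib

/-!
Since `k * C(n, k) = n * C(n - 1, k - 1)` and `1 / (k - 1) = k / (k - 1) - 1`, the left-hand side
equals `n * ∑_{j=1}^{n-1} C(n - 1, j) / j - (2^n - n - 1)`. It remains to use the classical identity
`∑_{j=1}^{m} C(m, j) / j = ∑_{j=1}^{m} (2^j - 1) / j`, which follows by induction on `m` from
Pascal's rule and `∑_{j=0}^{m} C(m, j) / (j + 1) = (2^(m+1) - 1) / (m + 1)`.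
-/

open Finset

theorem Finset.sum_Icc_eq_sum_range {M : Type*} [AddCommMonoid M] (f : ℕ → M) (a b : ℕ) :
    ∑ k ∈ Icc a b, f k = ∑ k ∈ range (b + 1 - a), f (k + a) := by
  rw [← Ico_add_one_right_eq_Icc, sum_Ico_eq_sum_range]
  simp only [add_comm a]

namespace Nat

theorem cast_add_one_mul_choose {R : Type*} [CommSemiring R] (m k : ℕ) :
    ((m : R) + 1) * m.choose k = (m + 1).choose (k + 1) * ((k : R) + 1) := by
  exact_mod_cast congrArg (Nat.cast : ℕ → R) (add_one_mul_choose_eq m k)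

section CommRing

variable {R : Type*} [CommRing R]

theorem sum_range_choose_succ (n : ℕ) : ∑ k ∈ range n, (n.choose (k + 1) : R) = 2 ^ n - 1 := by
  have h := sum_range_choose n
  rw [sum_range_succ', choose_zero_right] at h
  rw [eq_sub_iff_add_eq]
  exact_mod_cast congrArg (Nat.cast : ℕ → R) h

theorem sum_range_choose_add_two (m : ℕ) :
    ∑ k ∈ range m, ((m + 1).choose (k + 2) : R) = 2 ^ (m + 1) - (m + 1) - 1 := by
  have h : ∑ k ∈ range (m + 1), ((m + 1).choose (k + 1) : R) = 2 ^ (m + 1) - 1 :=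
    sum_range_choose_succ (m + 1)
  rw [sum_range_succ', choose_one_right] at h
  push_cast at h
  linear_combination h

end CommRing

variable {K : Type*} [Field K] [CharZero K]

theorem sum_range_choose_div_add_one (m : ℕ) :
    ∑ k ∈ range (m + 1), (m.choose k : K) / (k + 1) = (2 ^ (m + 1) - 1) / (m + 1) := by
  have hterm (k : ℕ) : (m.choose k : K) / (k + 1) = (m + 1).choose (k + 1) / (m + 1) := by
    rw [div_eq_div_iff k.cast_add_one_ne_zero m.cast_add_one_ne_zero, mul_comm,
      cast_add_one_mul_choose]
  simp_rw [hterm, ← sum_div, sum_range_choose_succ]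

theorem sum_range_choose_succ_div (m : ℕ) :
    ∑ k ∈ range m, (m.choose (k + 1) : K) / (k + 1) =
      ∑ k ∈ range m, ((2 : K) ^ (k + 1) - 1) / (k + 1) := by
  induction m with
  | zero => simp
  | succ m ih =>
    simp_rw [choose_succ_succ', cast_add, add_div, sum_add_distrib, sum_range_choose_div_add_one,
      sum_range_succ _ m, choose_succ_self, ih]
    push_cast
    ring

end Nat

theorem stmt12 (n : ℕ) :
    ∑ k ∈ Finset.Icc 2 n, (1 / ((k : ℚ) - 1)) * (n.choose k : ℚ) =
      (n : ℚ) * ∑ k ∈ Finset.Icc 1 (n - 1), ((2 : ℚ) ^ k - 1) / (k : ℚ)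
        - 2 ^ n + (n : ℚ) + 1 := by
  cases n with
  | zero => simp
  | succ m =>
    have hterm (k : ℕ) : 1 / (((k + 2 : ℕ) : ℚ) - 1) * ((m + 1).choose (k + 2) : ℚ)
        = (m + 1) * ((m.choose (k + 1) : ℚ) / (k + 1)) - (m + 1).choose (k + 2) := by
      rw [mul_div_assoc', Nat.cast_add_one_mul_choose]
      push_cast
      rw [show (k : ℚ) + 2 - 1 = k + 1 by ring]
      field_simp
      ring
    rw [sum_Icc_eq_sum_range, sum_Icc_eq_sum_range, show m + 1 + 1 - 2 = m by omega,
      show m + 1 - 1 + 1 - 1 = m by omega]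
    simp_rw [hterm, sum_sub_distrib, ← mul_sum, Nat.sum_range_choose_succ_div,
      Nat.sum_range_choose_add_two]
    push_cast
    ring
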